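/- arXiv:1501.02237 — 2 statements merged into one kernel-verified Lean document; each statement's English description precedes it below -/
import Mathlib

section
/- Let A ∈ M_{n×m}(ℤ) with rank r, let P ∈ M_{n×n}(ℤ) and Q ∈ M_{m×m}(ℤ) be unimodular matrices such that P·A·Q has (i,i) entry d_i ≠ 0 for 1 ≤ i ≤ r and all other entries 0, and let Q₀ ∈ M_{m×(m−r)}(ℤ) be the matrix formed by the last m−r columns of Q. Then for any b ∈ (ℂˣ)^m, the solution set {x ∈ (ℂˣ)^n : x^A = b} is nonempty if and only if b^{Q₀} = (1, …, 1) ∈ (ℂˣ)^{m−r}. -/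
/-!
Since `(x^A)^B = x^(AB)`, unimodular matrices act bijectively on `(ℂˣ)^n`, so with `y = x^(P⁻¹)`
the system `x^A = b` becomes the diagonal system `y^(PAQ) = b^Q`. Its first `r` equations
`y_i^(d_i) = (b^Q)_i` are solvable because `ℂˣ` is divisible, and the remaining ones say
`(b^Q)_j = 1`, i.e. `b^(Q₀) = 1`.
-/

/-- Matrix exponent: for `x ∈ (ℂˣ)^n` and `A ∈ M_{n×m}(ℤ)`,
`(x^A)_j = ∏_i x_i ^ A_{ij}`. -/
def matExp {n m : ℕ} (x : Fin n → ℂˣ) (A : Matrix (Fin n) (Fin m) ℤ) : Fin m → ℂˣ :=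
  fun j => ∏ i, x i ^ A i j

lemma zpow_sum {ι G : Type*} [CommGroup G] (a : G) (s : Finset ι) (f : ι → ℤ) :
    a ^ (∑ i ∈ s, f i) = ∏ i ∈ s, a ^ f i :=
  Finset.cons_induction (by simp) (fun _ _ _ ih ↦ by simp [zpow_add, ih]) s

section matExp

variable {n m k : ℕ}

lemma matExp_mul (x : Fin n → ℂˣ) (A : Matrix (Fin n) (Fin m) ℤ) (B : Matrix (Fin m) (Fin k) ℤ) :
    matExp (matExp x A) B = matExp x (A * B) := by
  funext j
  simp only [matExp, Matrix.mul_apply, zpow_sum, ← Finset.prod_zpow, ← zpow_mul]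
  exact Finset.prod_comm

lemma matExp_one (x : Fin n → ℂˣ) : matExp x 1 = x := by
  funext j
  simp [matExp, Matrix.one_apply]

lemma matExp_apply_of_col_eq_zero (x : Fin n → ℂˣ) {A : Matrix (Fin n) (Fin m) ℤ} {j : Fin m}
    (hA : ∀ i, A i j = 0) : matExp x A j = 1 :=
  Finset.prod_eq_one fun i _ ↦ by rw [hA, zpow_zero]

lemma matExp_apply_of_col_eq_single (x : Fin n → ℂˣ) {A : Matrix (Fin n) (Fin m) ℤ} {j : Fin m}
    (i₀ : Fin n) (hA : ∀ i ≠ i₀, A i j = 0) : matExp x A j = x i₀ ^ A i₀ j :=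
  Finset.prod_eq_single i₀ (fun i _ hi ↦ by rw [hA i hi, zpow_zero]) (by simp)

lemma exists_matExp_mul_left_eq_iff {P : Matrix (Fin n) (Fin n) ℤ} (hP : IsUnit P.det)
    (A : Matrix (Fin n) (Fin m) ℤ) (b : Fin m → ℂˣ) :
    (∃ x, matExp x (P * A) = b) ↔ ∃ x, matExp x A = b := by
  constructor
  · rintro ⟨x, rfl⟩
    exact ⟨matExp x P, matExp_mul x P A⟩
  · rintro ⟨x, rfl⟩
    refine ⟨matExp x P⁻¹, ?_⟩
    rw [matExp_mul, ← Matrix.mul_assoc, Matrix.nonsing_inv_mul P hP, Matrix.one_mul]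

lemma matExp_injective {Q : Matrix (Fin m) (Fin m) ℤ} (hQ : IsUnit Q.det) :
    Function.Injective fun x : Fin m → ℂˣ ↦ matExp x Q :=
  Function.LeftInverse.injective (g := fun y ↦ matExp y Q⁻¹) fun x ↦ by
    simp only [matExp_mul, Matrix.mul_nonsing_inv Q hQ, matExp_one]

lemma matExp_mul_right_eq_iff {Q : Matrix (Fin m) (Fin m) ℤ} (hQ : IsUnit Q.det)
    (x : Fin n → ℂˣ) (A : Matrix (Fin n) (Fin m) ℤ) (b : Fin m → ℂˣ) :
    matExp x (A * Q) = matExp b Q ↔ matExp x A = b := by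
  rw [← matExp_mul]
  exact (matExp_injective hQ).eq_iff

end matExp

lemma Complex.exists_units_zpow_eq (c : ℂˣ) {k : ℤ} (hk : k ≠ 0) : ∃ y : ℂˣ, y ^ k = c := by
  refine ⟨Units.mk0 (exp (log c / k)) (exp_ne_zero _), Units.ext ?_⟩
  rw [Units.val_zpow_eq_zpow_val, Units.val_mk0, ← exp_int_mul,
    mul_div_cancel₀ _ (Int.cast_ne_zero.mpr hk), exp_log c.ne_zero]

lemma Fin.forall_le_iff_forall_add {m r : ℕ} (p : Fin m → Prop) :
    (∀ j : Fin m, r ≤ j → p j) ↔ ∀ j : Fin (m - r), p ⟨r + j, by omega⟩ := by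
  refine ⟨fun h j ↦ h _ (by simp), fun h j hj ↦ ?_⟩
  simpa [Nat.add_sub_cancel' hj] using h ⟨j - r, by omega⟩

lemma exists_matExp_eq_iff_of_diagonal {n m r : ℕ} (hrn : r ≤ n) (hrm : r ≤ m)
    (D : Matrix (Fin n) (Fin m) ℤ) (d : Fin r → ℤ) (hd : ∀ i, d i ≠ 0)
    (hD : ∀ (i : Fin n) (j : Fin m),
      D i j = if h : (i : ℕ) = (j : ℕ) ∧ (i : ℕ) < r then d ⟨(i : ℕ), h.2⟩ else 0)
    (c : Fin m → ℂˣ) :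
    (∃ y, matExp y D = c) ↔ ∀ j : Fin m, r ≤ j → c j = 1 := by
  have hcol_zero (y : Fin n → ℂˣ) (j : Fin m) (hj : r ≤ j) : matExp y D j = 1 :=
    matExp_apply_of_col_eq_zero y fun i ↦ by rw [hD, dif_neg (by omega)]
  refine ⟨fun ⟨y, hy⟩ j hj ↦ hy ▸ hcol_zero y j hj, fun hc ↦ ?_⟩
  choose z hz using fun k : Fin r ↦ Complex.exists_units_zpow_eq (c (Fin.castLE hrm k)) (hd k)
  refine ⟨fun i ↦ if h : (i : ℕ) < r then z ⟨i, h⟩ else 1, funext fun j ↦ ?_⟩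
  by_cases hj : (j : ℕ) < r
  · rw [matExp_apply_of_col_eq_single _ ⟨j, by omega⟩
      fun i hi ↦ by rw [hD, dif_neg fun h ↦ hi (Fin.ext h.1)]]
    simpa [hD, hj] using hz ⟨j, hj⟩
  · rw [hcol_zero _ j (by omega), hc j (by omega)]

theorem stmt8 {n m : ℕ} (A : Matrix (Fin n) (Fin m) ℤ) (r : ℕ)
    (hr : r = (A.map (Int.cast : ℤ → ℚ)).rank)
    (P : Matrix (Fin n) (Fin n) ℤ) (Q : Matrix (Fin m) (Fin m) ℤ)
    (hP : P.det = 1 ∨ P.det = -1) (hQ : Q.det = 1 ∨ Q.det = -1)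
    (d : Fin r → ℤ) (hd : ∀ i, d i ≠ 0)
    (hSNF : ∀ (i : Fin n) (j : Fin m),
      (P * A * Q) i j =
        if h : (i : ℕ) = (j : ℕ) ∧ (i : ℕ) < r then d ⟨(i : ℕ), h.2⟩ else 0)
    (b : Fin m → ℂˣ) :
    (∃ x : Fin n → ℂˣ, matExp x A = b) ↔
      matExp b (Matrix.of fun (i : Fin m) (j : Fin (m - r)) =>
        Q i ⟨r + (j : ℕ), by have := j.isLt; omega⟩) = fun _ => 1 := by
  have hrn : r ≤ n := hr ▸ (Matrix.rank_le_card_height _).trans (by simp)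
  have hrm : r ≤ m := hr ▸ (Matrix.rank_le_card_width _).trans (by simp)
  calc (∃ x, matExp x A = b) ↔ ∃ x, matExp x (P * A * Q) = matExp b Q := by
        simp only [matExp_mul_right_eq_iff (Int.isUnit_iff.mpr hQ),
          exists_matExp_mul_left_eq_iff (Int.isUnit_iff.mpr hP)]
    _ ↔ ∀ j : Fin m, r ≤ j → matExp b Q j = 1 :=
        exists_matExp_eq_iff_of_diagonal hrn hrm _ d hd hSNF _
    _ ↔ _ := (Fin.forall_le_iff_forall_add _).trans funext_iff.symm
end

section
/- Let S ⊂ ℝ^d be a finite set whose convex hull has nonempty interior. For a lifting ω : S → ℝ write â = (a, ω(a)) and Ŝ = {â : a ∈ S}; for α ∈ ℝ^d let F_ω(α) = {a ∈ S : ⟨â, (α,1)⟩ ≤ ⟨b̂, (α,1)⟩ for all b ∈ S} (the set of points of S whose lifts attain the minimum of the linear functional ⟨·,(α,1)⟩ on Ŝ). Then for Lebesgue-almost every ω ∈ ℝ^S, the collection 𝒟 = {F_ω(α) : α ∈ ℝ^d, conv F_ω(α) has nonempty interior} is a simplicial subdivision of S; that is: every C ∈ 𝒟 consists of exactly d+1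 affinely independent points; for distinct C₁, C₂ ∈ 𝒟 the intersection conv C₁ ∩ conv C₂, if nonempty, equals conv(C₁ ∩ C₂); and the union of conv C over C ∈ 𝒟 equals conv S. -/
/-!
Lifting `a ↦ (a, ω a)` and projecting the lower faces of the convex hull of the lifted points
gives a subdivision of `conv S` for every `ω`: two lower cells meet in a common face because a
point of both hulls is, in each, a combination of lifted points at minimal height, so the two
lifts over it agree; and every interior point of `conv S` lies below a lower face, namely one
touching the lowest point of the lifted hull above it. Genericity enters only in the cell sizes:
`d + 2` lifted points on a common non-vertical hyperplane force `ω`, restricted to them, into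
the at most `(d + 1)`-dimensional space of affine functions, a Lebesgue-null condition. A
full-dimensional cell, having at most `d + 1` points, is then a simplex.
-/

open MeasureTheory Module

section WeightedSums

variable {E : Type*} [AddCommGroup E] [Module ℝ E]

lemma le_sum_mul_of_le {ι : Type*} {t : Finset ι} {l φ : ι → ℝ} {m : ℝ}
    (hl₀ : ∀ i ∈ t, 0 ≤ l i) (hl₁ : ∑ i ∈ t, l i = 1) (hm : ∀ i ∈ t, m ≤ φ i) :
    m ≤ ∑ i ∈ t, l i * φ i :=
  calc m = ∑ i ∈ t, l i * m := by rw [← Finset.sum_mul, hl₁, one_mul]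
    _ ≤ ∑ i ∈ t, l i * φ i :=
      Finset.sum_le_sum fun i hi => mul_le_mul_of_nonneg_left (hm i hi) (hl₀ i hi)

lemma sum_mul_le_of_le {ι : Type*} {t : Finset ι} {l φ : ι → ℝ} {m : ℝ}
    (hl₀ : ∀ i ∈ t, 0 ≤ l i) (hl₁ : ∑ i ∈ t, l i = 1) (hm : ∀ i ∈ t, φ i ≤ m) :
    ∑ i ∈ t, l i * φ i ≤ m :=
  neg_le_neg_iff.1 <| by
    simpa only [mul_neg, Finset.sum_neg_distrib] using
      le_sum_mul_of_le hl₀ hl₁ (φ := fun i => -φ i) fun i hi => neg_le_neg (hm i hi)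

lemma sum_smul_mem_convexHull_of_sum_mul_le {t : Finset E} {l φ : E → ℝ} {m : ℝ}
    (hl₀ : ∀ a ∈ t, 0 ≤ l a) (hl₁ : ∑ a ∈ t, l a = 1) (hm : ∀ a ∈ t, m ≤ φ a)
    (hsum : ∑ a ∈ t, l a * φ a ≤ m) :
    ∑ a ∈ t, l a • a ∈ convexHull ℝ {a | a ∈ t ∧ φ a ≤ m} := by
  classical
  have hnonneg : ∀ a ∈ t, 0 ≤ l a * (φ a - m) := fun a ha =>
    mul_nonneg (hl₀ a ha) (sub_nonneg.2 (hm a ha))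
  have hzero : ∀ a ∈ t, l a * (φ a - m) = 0 := by
    refine (Finset.sum_eq_zero_iff_of_nonneg hnonneg).1
      (le_antisymm ?_ (Finset.sum_nonneg hnonneg))
    simp only [mul_sub, Finset.sum_sub_distrib, ← Finset.sum_mul, hl₁, one_mul]
    linarith
  have hsupp : ∀ a ∈ t, l a ≠ 0 → φ a ≤ m := fun a ha hne =>
    (sub_eq_zero.1 ((mul_eq_zero.1 (hzero a ha)).resolve_left hne)).le
  have hset : {a | a ∈ t ∧ φ a ≤ m} = ↑(t.filter fun a => φ a ≤ m) := by
    ext; simp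
  rw [hset, Finset.mem_convexHull']
  refine ⟨l, fun a ha => hl₀ a (Finset.mem_filter.1 ha).1, ?_, ?_⟩
  · rwa [Finset.sum_filter_of_ne hsupp]
  · exact Finset.sum_filter_of_ne fun a ha h => hsupp a ha fun h0 => h (by rw [h0, zero_smul])

end WeightedSums

section AffineIndependence

variable {E : Type*} [AddCommGroup E] [Module ℝ E]

theorem card_eq_and_affineIndependent_of_affineSpan_eq_top {s : Finset E}
    (hspan : affineSpan ℝ (s : Set E) = ⊤) (hcard : s.card ≤ finrank ℝ E + 1) :
    s.card = finrank ℝ E + 1 ∧ AffineIndependent ℝ (Subtype.val : ↥(s : Set E) → E) := by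
  have hne : s.Nonempty := by
    rcases s.eq_empty_or_nonempty with rfl | h
    · simp at hspan
    · exact h
  have hvs :
      finrank ℝ (vectorSpan ℝ (Set.range (Subtype.val : ↥(s : Set E) → E))) = finrank ℝ E := by
    rw [Subtype.range_coe, ← direction_affineSpan, hspan, AffineSubspace.direction_top,
      finrank_top]
  obtain ⟨m, hm⟩ := Nat.exists_eq_add_one.2 hne.card_pos
  have hm' : Fintype.card ↥(s : Set E) = m + 1 := by simpa using hm
  have hle := finrank_vectorSpan_range_le ℝ (Subtype.val : ↥(s : Set E) → E) hm'
  exact ⟨by omega, (affineIndependent_iff_le_finrank_vectorSpan ℝ _ hm').2 (by omega)⟩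

end AffineIndependence

section LowerCells

variable {E : Type*} [AddCommGroup E] [Module ℝ E]

lemma sum_mul_apply_add (f : Dual ℝ E) (w : E → ℝ) (t : Finset E) (l : E → ℝ) :
    ∑ a ∈ t, l a * (f a + w a) = f (∑ a ∈ t, l a • a) + ∑ a ∈ t, l a * w a := by
  simp only [mul_add, Finset.sum_add_distrib, map_sum, map_smul, smul_eq_mul]

open scoped Classical in
noncomputable def lowerCell (S : Finset E) (w : E → ℝ) (f : Dual ℝ E) : Finset E :=
  S.filter fun a => ∀ b ∈ S, f a + w a ≤ f b + w b

variable {S : Finset E} {w : E → ℝ} {f : Dual ℝ E}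

lemma mem_lowerCell {a : E} :
    a ∈ lowerCell S w f ↔ a ∈ S ∧ ∀ b ∈ S, f a + w a ≤ f b + w b :=
  Finset.mem_filter

lemma lowerCell_subset : lowerCell S w f ⊆ S :=
  Finset.filter_subset _ _

/-- Over a point of the hull of a lower cell, the cell carries the lowest lift. -/
lemma sum_mul_le_of_sum_smul_eq {t : Finset E} {l μ : E → ℝ} (htS : t ⊆ S)
    (hl₀ : ∀ a ∈ lowerCell S w f, 0 ≤ l a) (hl₁ : ∑ a ∈ lowerCell S w f, l a = 1)
    (hμ₀ : ∀ a ∈ t, 0 ≤ μ a) (hμ₁ : ∑ a ∈ t, μ a = 1)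
    (hx : ∑ a ∈ lowerCell S w f, l a • a = ∑ a ∈ t, μ a • a) :
    ∑ a ∈ lowerCell S w f, l a * w a ≤ ∑ a ∈ t, μ a * w a := by
  obtain ⟨a₀, ha₀⟩ := Finset.nonempty_of_sum_ne_zero (hl₁.trans_ne one_ne_zero)
  have hcell := sum_mul_le_of_le hl₀ hl₁ fun a ha =>
    (mem_lowerCell.1 ha).2 a₀ (lowerCell_subset ha₀)
  have ht := le_sum_mul_of_le hμ₀ hμ₁ fun b hb => (mem_lowerCell.1 ha₀).2 b (htS hb)
  rw [sum_mul_apply_add, hx] at hcell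
  rw [sum_mul_apply_add] at ht
  linarith

theorem convexHull_lowerCell_inter (S : Finset E) (w : E → ℝ) (f₁ f₂ : Dual ℝ E) :
    convexHull ℝ ↑(lowerCell S w f₁) ∩ convexHull ℝ ↑(lowerCell S w f₂) =
      convexHull ℝ (↑(lowerCell S w f₁) ∩ ↑(lowerCell S w f₂) : Set E) := by
  refine subset_antisymm ?_ (Set.subset_inter (convexHull_mono Set.inter_subset_left)
    (convexHull_mono Set.inter_subset_right))
  rintro x ⟨hx₁, hx₂⟩
  obtain ⟨l, hl₀, hl₁, rfl⟩ := Finset.mem_convexHull'.1 hx₁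
  obtain ⟨μ, hμ₀, hμ₁, hμx⟩ := Finset.mem_convexHull'.1 hx₂
  have hle := sum_mul_le_of_sum_smul_eq lowerCell_subset hl₀ hl₁ hμ₀ hμ₁ hμx.symm
  have hge := sum_mul_le_of_sum_smul_eq lowerCell_subset hμ₀ hμ₁ hl₀ hl₁ hμx
  obtain ⟨a₂, ha₂⟩ := Finset.nonempty_of_sum_ne_zero (hμ₁.trans_ne one_ne_zero)
  have hmin : ∀ b ∈ S, f₂ a₂ + w a₂ ≤ f₂ b + w b := (mem_lowerCell.1 ha₂).2
  have hsum : ∑ a ∈ lowerCell S w f₁, l a * (f₂ a + w a) ≤ f₂ a₂ + w a₂ := by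
    have := sum_mul_le_of_le hμ₀ hμ₁ fun a ha =>
      (mem_lowerCell.1 ha).2 a₂ (lowerCell_subset ha₂)
    rw [sum_mul_apply_add] at this ⊢
    rw [← hμx]
    linarith
  refine convexHull_mono ?_ (sum_smul_mem_convexHull_of_sum_mul_le hl₀ hl₁
    (fun a ha => hmin a (lowerCell_subset ha)) hsum)
  rintro a ⟨ha, hale⟩
  exact ⟨ha, mem_lowerCell.2 ⟨lowerCell_subset ha, fun b hb => hale.trans (hmin b hb)⟩⟩

lemma exists_weights_of_mem_convexHull_graph {S : Finset E} {w : E → ℝ} {y : E} {t : ℝ}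
    (h : (y, t) ∈ convexHull ℝ ((fun a => (a, w a)) '' (S : Set E))) :
    ∃ l : E → ℝ, (∀ a ∈ S, 0 ≤ l a) ∧ ∑ a ∈ S, l a = 1 ∧ ∑ a ∈ S, l a • a = y ∧
      ∑ a ∈ S, l a * w a = t := by
  classical
  have hinj : Set.InjOn (fun a => (a, w a)) (S : Set E) := fun a _ b _ h => congrArg Prod.fst h
  rw [← Finset.coe_image, Finset.mem_convexHull'] at h
  obtain ⟨μ, hμ₀, hμ₁, hμ⟩ := h
  rw [Finset.sum_image hinj] at hμ₁ hμ
  obtain ⟨hy, ht⟩ := Prod.ext_iff.1 hμ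
  refine ⟨fun a => μ (a, w a), fun a ha => hμ₀ _ (Finset.mem_image_of_mem _ ha), hμ₁, ?_, ?_⟩
  · simpa only [Prod.fst_sum, Prod.smul_fst] using hy
  · simpa only [Prod.snd_sum, Prod.smul_snd, smul_eq_mul] using ht

end LowerCells

section LowestPoint

open Topology Pointwise

variable {X : Type*} [TopologicalSpace X]

lemma exists_forall_le_of_mem_image_fst [T1Space X] {K : Set (X × ℝ)} (hK : IsCompact K) {x : X}
    (hx : x ∈ Prod.fst '' K) : ∃ g, (x, g) ∈ K ∧ ∀ t, (x, t) ∈ K → g ≤ t := by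
  have hne : (K ∩ Prod.fst ⁻¹' {x}).Nonempty := by
    obtain ⟨p, hp, rfl⟩ := hx
    exact ⟨p, hp, rfl⟩
  obtain ⟨p, ⟨hpK, hpx⟩, hpmin⟩ :=
    (hK.inter_right (isClosed_singleton.preimage continuous_fst)).exists_isMinOn hne
      continuous_snd.continuousOn
  obtain ⟨y, t⟩ := p
  obtain rfl : y = x := hpx
  exact ⟨t, hpK, fun s hs => hpmin (a := (y, s)) ⟨hs, rfl⟩⟩

variable [AddCommGroup X]

lemma mk_notMem_interior_add_vertical {K : Set (X × ℝ)} {x : X} {g : ℝ}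
    (hg : ∀ t, (x, t) ∈ K → g ≤ t) :
    (x, g) ∉ interior (K + {(0 : X)} ×ˢ Set.Ici (0 : ℝ)) := by
  intro hmem
  have hev : ∀ᶠ s in 𝓝[<] g, (x, s) ∈ interior (K + {(0 : X)} ×ˢ Set.Ici (0 : ℝ)) :=
    ((Continuous.prodMk_right x).tendsto g).mono_left nhdsWithin_le_nhds
      |>.eventually (isOpen_interior.mem_nhds hmem)
  obtain ⟨s, hs, hsg⟩ := (hev.and self_mem_nhdsWithin).exists
  obtain ⟨k, hk, z, ⟨hz₁, hz₂⟩, hkz⟩ := interior_subset hs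
  obtain ⟨hk₁, hk₂⟩ := Prod.ext_iff.1 hkz
  simp only [Set.mem_singleton_iff.1 hz₁, Prod.fst_add, add_zero, Prod.snd_add] at hk₁ hk₂
  have := hg k.2 (by rwa [← hk₁])
  linarith [Set.mem_Ici.1 hz₂]

end LowestPoint

section Covering

open Pointwise

variable {E : Type*} [NormedAddCommGroup E] [NormedSpace ℝ E]

/-- The supporting hyperplane is not vertical because `x` is interior to the shadow of `K`. -/
theorem exists_support_below {K : Set (E × ℝ)} (hKc : Convex ℝ K) (hK : IsCompact K) {x : E}
    (hx : x ∈ interior (Prod.fst '' K)) :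
    ∃ g, (x, g) ∈ K ∧ ∃ f : Dual ℝ E, ∀ p ∈ K, f x + g ≤ f p.1 + p.2 := by
  obtain ⟨g, hgK, hgmin⟩ := exists_forall_le_of_mem_image_fst hK (interior_subset hx)
  obtain ⟨M, hM⟩ := hK.bddAbove_image continuous_snd.continuousOn
  -- unlike `K`, the region `A` above `K` has interior, and `(x, g)` lies on its boundary
  set A := K + {(0 : E)} ×ˢ Set.Ici (0 : ℝ)
  have hA : Convex ℝ A := hKc.add ((convex_singleton 0).prod (convex_Ici 0))
  have hKA : ∀ p ∈ K, ∀ t, p.2 ≤ t → (p.1, t) ∈ A := fun p hp t ht =>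
    ⟨p, hp, (0, t - p.2), ⟨rfl, sub_nonneg.2 ht⟩, by ext <;> simp⟩
  have hint : (x, M + 1) ∈ interior A := by
    refine interior_maximal ?_ (isOpen_interior.prod isOpen_Ioi) ⟨hx, lt_add_one M⟩
    rintro ⟨y, t⟩ ⟨hy, ht⟩
    obtain ⟨p, hp, rfl⟩ := interior_subset hy
    exact hKA p hp t ((hM ⟨p, hp, rfl⟩).trans (Set.mem_Ioi.1 ht).le)
  obtain ⟨ℓ, hℓ⟩ := geometric_hahn_banach_open_point hA.interior isOpen_interior
    (mk_notMem_interior_add_vertical hgmin)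
  have hℓA : ∀ p ∈ A, ℓ p ≤ ℓ (x, g) := by
    refine fun p hp => closure_minimal (fun q hq => (hℓ q hq).le)
      (isClosed_le ℓ.continuous continuous_const) ?_
    rw [hA.closure_interior_eq_closure_of_nonempty_interior ⟨_, hint⟩]
    exact subset_closure hp
  set c := ℓ (0, 1)
  have hdec : ∀ y t, ℓ (y, t) = ℓ (y, 0) + c * t := fun y t => by
    rw [mul_comm, ← smul_eq_mul, ← map_smul, ← map_add]; simp
  have hc : c < 0 := by
    have h := hℓ _ hint
    rw [hdec, hdec x g] at h
    nlinarith [hM ⟨_, hgK, rfl⟩]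
  refine ⟨g, hgK, c⁻¹ • (ℓ : E × ℝ →ₗ[ℝ] ℝ).comp (LinearMap.inl ℝ E ℝ), fun p hp => ?_⟩
  have h := hℓA p (by simpa using hKA p hp p.2 le_rfl)
  rw [hdec x g, hdec p.1 p.2] at h
  have := mul_le_mul_of_nonpos_left h (inv_nonpos.2 hc.le)
  rw [mul_add, mul_add, inv_mul_cancel_left₀ hc.ne, inv_mul_cancel_left₀ hc.ne] at this
  simpa only [LinearMap.smul_apply, LinearMap.comp_apply, LinearMap.inl_apply,
    ContinuousLinearMap.coe_coe, smul_eq_mul] using this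

theorem exists_mem_convexHull_lowerCell (S : Finset E) (w : E → ℝ) {x : E}
    (hx : x ∈ interior (convexHull ℝ (S : Set E))) :
    ∃ f : Dual ℝ E, x ∈ convexHull ℝ ↑(lowerCell S w f) := by
  have hshadow : Prod.fst '' convexHull ℝ ((fun a => (a, w a)) '' (S : Set E)) =
      convexHull ℝ ↑S := by
    rw [← LinearMap.coe_fst (R := ℝ) (M₂ := ℝ), LinearMap.image_convexHull, Set.image_image]
    simp
  obtain ⟨g, hgK, f, hf⟩ := exists_support_below (convex_convexHull ℝ _)
    ((S.finite_toSet.image fun a => (a, w a)).isCompact_convexHull ℝ) (by rwa [hshadow])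
  have hlift : ∀ a ∈ S, f x + g ≤ f a + w a := fun a ha =>
    hf _ (subset_convexHull ℝ _ ⟨a, ha, rfl⟩)
  obtain ⟨l, hl₀, hl₁, hlx, hlg⟩ := exists_weights_of_mem_convexHull_graph hgK
  have hmem := sum_smul_mem_convexHull_of_sum_mul_le (φ := fun a => f a + w a) hl₀ hl₁ hlift
    (by rw [sum_mul_apply_add, hlx, hlg])
  refine ⟨f, convexHull_mono ?_ (hlx ▸ hmem)⟩
  rintro a ⟨ha, hle⟩
  exact mem_lowerCell.2 ⟨ha, fun b hb => hle.trans (hlift b hb)⟩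

variable [FiniteDimensional ℝ E]

theorem card_lowerCell_eq_and_affineIndependent {S : Finset E} {w : E → ℝ}
    (hgen : ∀ (f : Dual ℝ E) (c : ℝ) (T : Finset E), T ⊆ S → (∀ a ∈ T, f a + w a = c) →
      T.card ≤ finrank ℝ E + 1)
    {f : Dual ℝ E} (hint : (interior (convexHull ℝ (lowerCell S w f : Set E))).Nonempty) :
    (lowerCell S w f).card = finrank ℝ E + 1 ∧
      AffineIndependent ℝ (Subtype.val : ↥(lowerCell S w f : Set E) → E) := by
  have hspan : affineSpan ℝ (lowerCell S w f : Set E) = ⊤ := by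
    rw [← affineSpan_convexHull]
    exact (convex_convexHull ℝ _).interior_nonempty_iff_affineSpan_eq_top.1 hint
  obtain ⟨a₀, ha₀⟩ := Finset.coe_nonempty.1 (convexHull_nonempty_iff.1 (hint.mono interior_subset))
  refine card_eq_and_affineIndependent_of_affineSpan_eq_top hspan
    (hgen f (f a₀ + w a₀) _ lowerCell_subset fun a ha => le_antisymm ?_ ?_)
  · exact (mem_lowerCell.1 ha).2 a₀ (lowerCell_subset ha₀)
  · exact (mem_lowerCell.1 ha₀).2 a (lowerCell_subset ha)

lemma AffineSubspace.dense_compl {P : AffineSubspace ℝ E} (hP : P ≠ ⊤) : Dense (P : Set E)ᶜ := by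
  rw [← interior_eq_empty_iff_dense_compl, ← Set.not_nonempty_iff_eq_empty,
    P.convex.interior_nonempty_iff_affineSpan_eq_top, AffineSubspace.affineSpan_coe]
  exact hP

def fullDimCells (S : Finset E) (w : E → ℝ) : Set (Set E) :=
  {C | ∃ f : Dual ℝ E, C = lowerCell S w f ∧
    (interior (convexHull ℝ (lowerCell S w f : Set E))).Nonempty}

/-- Lower cells cover the interior of the hull; the lower-dimensional ones lie in finitely many
proper affine subspaces, so the full-dimensional ones cover a dense subset, hence everything. -/
theorem biUnion_fullDimCells_convexHull (S : Finset E) (w : E → ℝ)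
    (hS : (interior (convexHull ℝ (S : Set E))).Nonempty) :
    ⋃ C ∈ fullDimCells S w, convexHull ℝ C = convexHull ℝ (S : Set E) := by
  refine subset_antisymm (Set.iUnion₂_subset fun C ⟨f, hC, _⟩ =>
    hC ▸ convexHull_mono (Finset.coe_subset.2 lowerCell_subset)) ?_
  set U := ⋃ C ∈ fullDimCells S w, convexHull ℝ C
  set O := interior (convexHull ℝ (S : Set E))
  set thin := {t : Finset E | t ⊆ S ∧ affineSpan ℝ (t : Set E) ≠ ⊤}
  set G := ⋂₀ ((fun t : Finset E => (affineSpan ℝ (t : Set E) : Set E)ᶜ) '' thin)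
  have hthin : thin.Finite :=
    S.powerset.finite_toSet.subset fun t ht => Finset.mem_coe.2 (Finset.mem_powerset.2 ht.1)
  have hG : Dense G := (hthin.image _).dense_sInter
    (by rintro _ ⟨t, -, rfl⟩; exact (AffineSubspace.closed_of_finiteDimensional _).isOpen_compl)
    (by rintro _ ⟨t, ht, rfl⟩; exact AffineSubspace.dense_compl ht.2)
  have hcells : (fullDimCells S w).Finite :=
    ((S.powerset.finite_toSet).image ((↑) : Finset E → Set E)).subset
      fun C ⟨f, hC, _⟩ => ⟨_, Finset.mem_coe.2 (Finset.mem_powerset.2 lowerCell_subset), hC.symm⟩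
  have hU : IsClosed U := hcells.isClosed_biUnion fun C ⟨f, hC, _⟩ =>
    hC ▸ (Finset.finite_toSet _).isClosed_convexHull ℝ
  have hOG : O ∩ G ⊆ U := by
    rintro x ⟨hxO, hxG⟩
    obtain ⟨f, hxf⟩ := exists_mem_convexHull_lowerCell S w hxO
    have hspan : affineSpan ℝ (lowerCell S w f : Set E) = ⊤ := by
      by_contra h
      exact Set.mem_sInter.1 hxG _ ⟨_, ⟨lowerCell_subset, h⟩, rfl⟩
        (convexHull_subset_affineSpan _ hxf)
    refine Set.mem_biUnion ⟨f, rfl, ?_⟩ hxf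
    rwa [(convex_convexHull ℝ _).interior_nonempty_iff_affineSpan_eq_top, affineSpan_convexHull]
  calc convexHull ℝ (S : Set E)
      ⊆ closure O := by
        rw [(convex_convexHull ℝ _).closure_interior_eq_closure_of_nonempty_interior hS]
        exact subset_closure
    _ ⊆ closure (O ∩ G) := closure_minimal (hG.open_subset_closure_inter isOpen_interior)
        isClosed_closure
    _ ⊆ U := closure_minimal hOG hU

end Covering

section Genericity

variable {E : Type*} [AddCommGroup E] [Module ℝ E]

def affineRestriction {ι : Type*} (p : ι → E) (T : Set ι) : Dual ℝ E × ℝ →ₗ[ℝ] (T → ℝ) :=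
  LinearMap.pi fun i => LinearMap.snd ℝ _ ℝ - (Dual.eval ℝ E (p i)).comp (LinearMap.fst ℝ _ ℝ)

lemma affineRestriction_apply {ι : Type*} (p : ι → E) (T : Set ι) (f : Dual ℝ E) (c : ℝ)
    (i : T) : affineRestriction p T (f, c) i = c - f (p i) := rfl

variable [FiniteDimensional ℝ E]

lemma range_affineRestriction_ne_top {ι : Type*} (p : ι → E) {T : Finset ι}
    (hT : finrank ℝ E + 1 < T.card) : LinearMap.range (affineRestriction p (T : Set ι)) ≠ ⊤ := by
  intro htop
  have := LinearMap.finrank_range_le (affineRestriction p (T : Set ι))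
  rw [htop, finrank_top, finrank_fintype_fun_eq_card, finrank_prod, Subspace.dual_finrank_eq,
    finrank_self] at this
  simp only [Finset.coe_sort_coe, Fintype.card_coe] at this
  omega

theorem ae_card_le_finrank_add_one {ι : Type*} [Fintype ι] (p : ι → E) :
    ∀ᵐ ω ∂(volume : Measure (ι → ℝ)), ∀ (f : Dual ℝ E) (c : ℝ) (T : Finset ι),
      (∀ i ∈ T, f (p i) + ω i = c) → T.card ≤ finrank ℝ E + 1 := by
  classical
  let V (T : Finset ι) : Submodule ℝ (ι → ℝ) :=
    (LinearMap.range (affineRestriction p (T : Set ι))).comap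
      (LinearMap.funLeft ℝ ℝ (Subtype.val : ↥(T : Set ι) → ι))
  have hV : ∀ T : Finset ι, finrank ℝ E + 1 < T.card → V T ≠ ⊤ := fun T hT hVT => by
    refine range_affineRestriction_ne_top p hT ?_
    rw [eq_top_iff, ← (LinearMap.range_eq_top.2
      (LinearMap.funLeft_surjective_of_injective ℝ ℝ _ Subtype.val_injective)),
      LinearMap.range_le_iff_comap]
    exact hVT
  rw [ae_iff]
  refine measure_mono_null (t := ⋃ T ∈ Finset.univ.filter fun T : Finset ι =>
      finrank ℝ E + 1 < T.card, (V T : Set (ι → ℝ))) ?_ ?_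
  · intro ω hω
    simp only [Set.mem_ofPred_eq, not_forall, not_le] at hω
    obtain ⟨f, c, T, hT, hcard⟩ := hω
    refine Set.mem_biUnion (Finset.mem_filter.2 ⟨Finset.mem_univ T, hcard⟩) ⟨(f, c), ?_⟩
    funext i
    rw [affineRestriction_apply, LinearMap.funLeft_apply, ← hT i i.2]
    ring
  · exact (measure_biUnion_null_iff (Finset.countable_toSet _)).2 fun T hT =>
      Measure.addHaar_submodule _ _ (hV T (Finset.mem_filter.1 hT).2)

theorem ae_card_le_of_subset (S : Finset E) :
    ∀ᵐ ω ∂(volume : Measure (S → ℝ)), ∀ (f : Dual ℝ E) (c : ℝ) (T : Finset E), T ⊆ S →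
      (∀ a ∈ T, f a + Function.extend Subtype.val ω (0 : E → ℝ) a = c) →
        T.card ≤ finrank ℝ E + 1 := by
  classical
  filter_upwards [ae_card_le_finrank_add_one (Subtype.val : S → E)] with ω hω f c T hTS hT
  have := hω f c (T.subtype (· ∈ S)) fun i hi => by
    simpa only [Subtype.val_injective.extend_apply] using hT i (Finset.mem_subtype.1 hi)
  rwa [Finset.card_subtype, Finset.filter_true_of_mem hTS] at this

end Genericity

theorem setOf_sum_mul_add_le_eq_lowerCell {d : ℕ} (S : Finset (Fin d → ℝ)) (ω : S → ℝ)
    (α : Fin d → ℝ) :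
    {a | ∃ ha : a ∈ S, ∀ b, ∀ hb : b ∈ S,
        (∑ i, a i * α i) + ω ⟨a, ha⟩ ≤ (∑ i, b i * α i) + ω ⟨b, hb⟩} =
      lowerCell S (Function.extend Subtype.val ω 0) (dotProductEquiv ℝ (Fin d) α) := by
  have hw : ∀ {a} (ha : a ∈ S), Function.extend Subtype.val ω 0 a = ω ⟨a, ha⟩ := fun ha =>
    Subtype.val_injective.extend_apply ω 0 ⟨_, ha⟩
  have hα : ∀ a, dotProductEquiv ℝ (Fin d) α a = ∑ i, a i * α i := fun a => by
    simp only [dotProductEquiv_apply_apply, dotProduct, mul_comm]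
  ext a
  simp only [Set.mem_ofPred_eq, Finset.mem_coe, mem_lowerCell, hα]
  exact ⟨fun ⟨ha, h⟩ => ⟨ha, fun b hb => by simpa only [hw ha, hw hb] using h b hb⟩,
    fun ⟨ha, h⟩ => ⟨ha, fun b hb => by simpa only [hw ha, hw hb] using h b hb⟩⟩

theorem stmt19 {d : ℕ} (S : Finset (Fin d → ℝ))
    (hS : (interior (convexHull ℝ (S : Set (Fin d → ℝ)))).Nonempty) :
    ∀ᵐ ω ∂(volume : Measure (↥S → ℝ)),
      -- `F ω α` is the set of points of `S` whose lifts attain the minimum of the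
      -- linear functional `⟨·, (α,1)⟩` on the lifted set `Ŝ`
      let F : (Fin d → ℝ) → Set (Fin d → ℝ) := fun α =>
        {a | ∃ ha : a ∈ S, ∀ b, ∀ hb : b ∈ S,
          (∑ i, a i * α i) + ω ⟨a, ha⟩ ≤ (∑ i, b i * α i) + ω ⟨b, hb⟩}
      let 𝒟 : Set (Set (Fin d → ℝ)) :=
        {C | ∃ α : Fin d → ℝ, C = F α ∧ (interior (convexHull ℝ (F α))).Nonempty}
      (∀ C ∈ 𝒟, C.Finite ∧ C.ncard = d + 1 ∧
        AffineIndependent ℝ (Subtype.val : ↥C → (Fin d → ℝ))) ∧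
      (∀ C₁ ∈ 𝒟, ∀ C₂ ∈ 𝒟, C₁ ≠ C₂ →
        (convexHull ℝ C₁ ∩ convexHull ℝ C₂).Nonempty →
        convexHull ℝ C₁ ∩ convexHull ℝ C₂ = convexHull ℝ (C₁ ∩ C₂)) ∧
      (⋃ C ∈ 𝒟, convexHull ℝ C) = convexHull ℝ (S : Set (Fin d → ℝ)) := by
  filter_upwards [ae_card_le_of_subset S] with ω hgen
  intro F 𝒟
  set w := Function.extend Subtype.val ω (0 : (Fin d → ℝ) → ℝ)
  have h𝒟 : 𝒟 = fullDimCells S w := by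
    ext C
    simp only [𝒟, F, setOf_sum_mul_add_le_eq_lowerCell, fullDimCells, Set.mem_ofPred_eq]
    exact ⟨fun ⟨α, h⟩ => ⟨_, h⟩, fun ⟨f, h⟩ =>
      ⟨(dotProductEquiv ℝ (Fin d)).symm f, by simpa only [LinearEquiv.apply_symm_apply]⟩⟩
  rw [h𝒟]
  refine ⟨?_, ?_, biUnion_fullDimCells_convexHull S w hS⟩
  · rintro _ ⟨f, rfl, hint⟩
    obtain ⟨hcard, hind⟩ := card_lowerCell_eq_and_affineIndependent hgen hint
    exact ⟨Finset.finite_toSet _, by rw [Set.ncard_coe_finset, hcard, finrank_fin_fun], hind⟩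
  · rintro _ ⟨f₁, rfl, -⟩ _ ⟨f₂, rfl, -⟩ - -
    exact convexHull_lowerCell_inter S w f₁ f₂
end
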